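/- The value function V of the two-good problem tends to −∞ at infinity: V(h₀) → −∞ as h₀ → +∞. -/

import Mathlib

open MeasureTheory Real Set Filter

/-- State trajectory `h^{h₀,ℓ}(t) = e^{−φt} h₀ + φ ∫₀ᵗ e^{−φ(t−s)} ℓ(s) ds`. -/
noncomputable def traj (φ h₀ : ℝ) (ℓ : ℝ → ℝ) (t : ℝ) : ℝ :=
  Real.exp (-(φ * t)) * h₀ + φ * ∫ s in (0:ℝ)..t, Real.exp (-(φ * (t - s))) * ℓ s

/-- Instantaneous utility of the two-good problem:
`U(ℓ, h) = ℓ^{1−σ} h^{γ(σ−1)} / (1−σ) + B̃ (1−ℓ)^{1−σ} / (1−σ)`, with `B̃ = B^{1−σ}`. -/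
noncomputable def U2 (σ γ B ℓ h : ℝ) : ℝ :=
  ℓ ^ (1 - σ) * h ^ (γ * (σ - 1)) / (1 - σ) +
    B ^ (1 - σ) * (1 - ℓ) ^ (1 - σ) / (1 - σ)

/-- Admissible controls: measurable, with values in `[ℓ̲, ℓ̄]`. -/
def Admissible (lo hi : ℝ) (ℓ : ℝ → ℝ) : Prop :=
  Measurable ℓ ∧ ∀ t, 0 ≤ t → ℓ t ∈ Set.Icc lo hi

/-- Value function of the two-good problem. -/
noncomputable def V (ρ φ σ γ B lo hi h₀ : ℝ) : ℝ :=
  sSup {x | ∃ ℓ : ℝ → ℝ, Admissible lo hi ℓ ∧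
    x = ∫ t in Set.Ioi (0:ℝ), Real.exp (-(ρ * t)) * U2 σ γ B (ℓ t) (traj φ h₀ ℓ t)}

/-! Since `σ > 1` both terms of the utility are negative, and the first one is at most
`-ℓ̄^{1−σ} h^{γ(σ−1)} / (σ−1)`. The state never falls below its free decay `e^{−φt} h₀`, so every
admissible payoff is at most `-ℓ̄^{1−σ} h₀^{γ(σ−1)} / ((σ−1)(ρ+φγ(σ−1)))`, which tends to `−∞`.
The state also stays below `max h₀ ℓ̄`, so the payoff integrand is integrable and the Bochner
integral is not the junk value `0`. -/

section Trajectory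

variable {φ lo hi h₀ t : ℝ} {ℓ : ℝ → ℝ}

theorem intervalIntegrable_of_mem_Icc (hm : Measurable ℓ) (hb : ∀ s, ℓ s ∈ Icc lo hi)
    (a b : ℝ) : IntervalIntegrable ℓ volume a b :=
  (intervalIntegrable_const (c := max |lo| |hi|)).mono_fun hm.aestronglyMeasurable
    (ae_of_all _ fun s => by
      simpa [abs_of_nonneg ((abs_nonneg lo).trans (le_max_left _ _))]
        using abs_le_max_abs_abs (hb s).1 (hb s).2)

theorem traj_eq_exp_mul (φ h₀ : ℝ) (ℓ : ℝ → ℝ) (t : ℝ) :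
    traj φ h₀ ℓ t = exp (-(φ * t)) * (h₀ + φ * ∫ s in (0:ℝ)..t, exp (φ * s) * ℓ s) := by
  have hkernel : ∀ s, exp (-(φ * (t - s))) * ℓ s = exp (-(φ * t)) * (exp (φ * s) * ℓ s) :=
    fun s => by rw [← mul_assoc, ← exp_add]; ring_nf
  simp only [traj, hkernel, intervalIntegral.integral_const_mul]
  ring

theorem continuous_traj (hm : Measurable ℓ) (hb : ∀ s, ℓ s ∈ Icc lo hi) (φ h₀ : ℝ) :
    Continuous (traj φ h₀ ℓ) := by
  have hprim : Continuous fun t => ∫ s in (0:ℝ)..t, exp (φ * s) * ℓ s :=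
    intervalIntegral.continuous_primitive (fun a b =>
      (intervalIntegrable_of_mem_Icc hm hb a b).continuousOn_mul (by fun_prop)) 0
  rw [funext (traj_eq_exp_mul φ h₀ ℓ)]
  fun_prop

theorem traj_const (φ h₀ c t : ℝ) :
    traj φ h₀ (fun _ => c) t = c + exp (-(φ * t)) * (h₀ - c) := by
  have hderiv : ∀ s, HasDerivAt (fun s => c * exp (-(φ * (t - s))))
      (φ * (exp (-(φ * (t - s))) * c)) s := fun s => by
    have hinner : HasDerivAt (fun s => -(φ * (t - s))) φ s := by
      rw [show (fun s => -(φ * (t - s))) = fun s => s * φ - φ * t by funext; ring]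
      exact (hasDerivAt_mul_const φ).sub_const (φ * t)
    exact (((hasDerivAt_exp _).comp s hinner).const_mul c).congr_deriv (by ring)
  rw [traj, ← intervalIntegral.integral_const_mul,
    intervalIntegral.integral_eq_sub_of_hasDerivAt (fun s _ => hderiv s)
      (Continuous.intervalIntegrable (by fun_prop) _ _)]
  simp only [sub_self, sub_zero, mul_zero, neg_zero, exp_zero]
  ring

theorem traj_mono {ℓ₁ ℓ₂ : ℝ → ℝ} (hφ : 0 ≤ φ) (ht : 0 ≤ t)
    (hℓ₁ : IntervalIntegrable ℓ₁ volume 0 t) (hℓ₂ : IntervalIntegrable ℓ₂ volume 0 t)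
    (hle : ∀ s ∈ Icc 0 t, ℓ₁ s ≤ ℓ₂ s) : traj φ h₀ ℓ₁ t ≤ traj φ h₀ ℓ₂ t := by
  unfold traj
  gcongr
  exact intervalIntegral.integral_mono_on ht (hℓ₁.continuousOn_mul (by fun_prop))
    (hℓ₂.continuousOn_mul (by fun_prop))
    fun s hs => mul_le_mul_of_nonneg_left (hle s hs) (exp_pos _).le

theorem exp_mul_le_traj (hφ : 0 ≤ φ) (ht : 0 ≤ t) (hm : Measurable ℓ)
    (hb : ∀ s, ℓ s ∈ Icc lo hi) (hlo : 0 ≤ lo) : exp (-(φ * t)) * h₀ ≤ traj φ h₀ ℓ t := by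
  simpa [traj_const] using traj_mono (h₀ := h₀) hφ ht intervalIntegrable_const
    (intervalIntegrable_of_mem_Icc hm hb 0 t) fun s _ => hlo.trans (hb s).1

theorem traj_le_max (hφ : 0 ≤ φ) (ht : 0 ≤ t) (hm : Measurable ℓ)
    (hb : ∀ s, ℓ s ∈ Icc lo hi) : traj φ h₀ ℓ t ≤ max h₀ hi := by
  have hexp : exp (-(φ * t)) ≤ 1 := exp_le_one_iff.2 (by nlinarith)
  calc traj φ h₀ ℓ t ≤ hi + exp (-(φ * t)) * (h₀ - hi) := by
        simpa [traj_const] using traj_mono (h₀ := h₀) hφ ht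
          (intervalIntegrable_of_mem_Icc hm hb 0 t) intervalIntegrable_const
          fun s _ => (hb s).2
    _ ≤ max h₀ hi := by
        nlinarith [le_max_left h₀ hi, le_max_right h₀ hi, exp_pos (-(φ * t))]

theorem traj_congr {ℓ₁ ℓ₂ : ℝ → ℝ} (h : EqOn ℓ₁ ℓ₂ (Ici 0)) (ht : 0 ≤ t) :
    traj φ h₀ ℓ₁ t = traj φ h₀ ℓ₂ t := by
  unfold traj
  congr 2
  refine intervalIntegral.integral_congr fun s hs => ?_
  rw [uIcc_of_le ht] at hs
  simp only [h hs.1]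

end Trajectory

section Utility

variable {σ γ B ℓ h : ℝ}

theorem U2_eq_neg_div (hσ : σ ≠ 1) :
    U2 σ γ B ℓ h = -((ℓ ^ (1 - σ) * h ^ (γ * (σ - 1)) + B ^ (1 - σ) * (1 - ℓ) ^ (1 - σ))
      / (σ - 1)) := by
  have : σ - 1 ≠ 0 := sub_ne_zero.2 hσ
  have : 1 - σ ≠ 0 := sub_ne_zero.2 hσ.symm
  unfold U2
  field_simp
  ring

theorem U2_le (hσ : 1 < σ) (hB : 0 ≤ B) (hℓ : 0 < ℓ) {hi : ℝ} (hℓhi : ℓ ≤ hi) (hhi : hi ≤ 1)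
    (hh : 0 ≤ h) : U2 σ γ B ℓ h ≤ -(hi ^ (1 - σ) * h ^ (γ * (σ - 1)) / (σ - 1)) := by
  rw [U2_eq_neg_div hσ.ne', neg_le_neg_iff]
  refine div_le_div_of_nonneg_right (le_add_of_le_of_nonneg ?_ ?_) (sub_pos.2 hσ).le
  · exact mul_le_mul_of_nonneg_right (rpow_le_rpow_of_nonpos hℓ hℓhi (by linarith))
      (rpow_nonneg hh _)
  · exact mul_nonneg (rpow_nonneg hB _) (rpow_nonneg (by linarith) _)

theorem abs_U2_le (hσ : 1 < σ) (hγσ : 0 ≤ γ * (σ - 1)) (hB : 0 ≤ B) {lo hi H : ℝ}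
    (hlo : 0 < lo) (hhi : hi < 1) (hℓ : ℓ ∈ Icc lo hi) (hh : h ∈ Icc 0 H) :
    |U2 σ γ B ℓ h| ≤
      (lo ^ (1 - σ) * H ^ (γ * (σ - 1)) + B ^ (1 - σ) * (1 - hi) ^ (1 - σ)) / (σ - 1) := by
  have hℓpos : 0 < ℓ := hlo.trans_le hℓ.1
  have h1ℓ : 0 < 1 - ℓ := by linarith [hℓ.2]
  have hσ1 : 0 < σ - 1 := sub_pos.2 hσ
  rw [U2_eq_neg_div hσ.ne', abs_neg, abs_of_nonneg (div_nonneg (add_nonneg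
    (mul_nonneg (rpow_nonneg hℓpos.le _) (rpow_nonneg hh.1 _))
    (mul_nonneg (rpow_nonneg hB _) (rpow_nonneg h1ℓ.le _))) hσ1.le)]
  refine div_le_div_of_nonneg_right (add_le_add ?_ ?_) hσ1.le
  · exact mul_le_mul (rpow_le_rpow_of_nonpos hlo hℓ.1 (by linarith))
      (rpow_le_rpow hh.1 hh.2 hγσ) (rpow_nonneg hh.1 _) (rpow_nonneg hlo.le _)
  · exact mul_le_mul_of_nonneg_left
      (rpow_le_rpow_of_nonpos (by linarith) (by linarith [hℓ.2]) (by linarith)) (rpow_nonneg hB _)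

end Utility

-- Admissibility constrains `ℓ` only on `[0, ∞)`; clamping it into `[lo, hi]` everywhere makes
-- `s ↦ e^{φs} ℓ(s)` locally integrable on all of `ℝ` without changing the payoff.
theorem Admissible.exists_measurable_eqOn_Ici {lo hi : ℝ} {ℓ : ℝ → ℝ} (hlohi : lo ≤ hi)
    (h : Admissible lo hi ℓ) :
    ∃ ℓ' : ℝ → ℝ, Measurable ℓ' ∧ (∀ s, ℓ' s ∈ Icc lo hi) ∧ EqOn ℓ ℓ' (Ici 0) :=
  ⟨fun s => projIcc lo hi hlohi (ℓ s),
    (continuous_subtype_val.comp continuous_projIcc).measurable.comp h.1,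
    fun s => (projIcc lo hi hlohi (ℓ s)).2,
    fun s hs => by simp only [projIcc_of_mem hlohi (h.2 s hs)]⟩

noncomputable def payoff (ρ φ σ γ B h₀ : ℝ) (ℓ : ℝ → ℝ) : ℝ :=
  ∫ t in Ioi (0:ℝ), exp (-(ρ * t)) * U2 σ γ B (ℓ t) (traj φ h₀ ℓ t)

section Payoff

variable {ρ φ σ γ B lo hi h₀ : ℝ} {ℓ : ℝ → ℝ}

theorem payoff_congr {ℓ₁ ℓ₂ : ℝ → ℝ} (h : EqOn ℓ₁ ℓ₂ (Ici 0)) :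
    payoff ρ φ σ γ B h₀ ℓ₁ = payoff ρ φ σ γ B h₀ ℓ₂ :=
  setIntegral_congr_fun measurableSet_Ioi fun t ht => by
    rw [traj_congr h (le_of_lt ht), h (Ioi_subset_Ici_self ht)]

theorem integrableOn_payoff_integrand (hρ : 0 < ρ) (hφ : 0 ≤ φ) (hσ : 1 < σ)
    (hγσ : 0 ≤ γ * (σ - 1)) (hB : 0 ≤ B) (hlo : 0 < lo) (hhi : hi < 1) (hm : Measurable ℓ)
    (hb : ∀ s, ℓ s ∈ Icc lo hi) (hh₀ : 0 ≤ h₀) :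
    IntegrableOn (fun t => exp (-(ρ * t)) * U2 σ γ B (ℓ t) (traj φ h₀ ℓ t)) (Ioi 0) := by
  have htraj := (continuous_traj hm hb φ h₀).measurable
  refine ((exp_neg_integrableOn_Ioi 0 hρ).const_mul
    ((lo ^ (1 - σ) * max h₀ hi ^ (γ * (σ - 1)) + B ^ (1 - σ) * (1 - hi) ^ (1 - σ)) / (σ - 1))).mono' ?_
    ((ae_restrict_iff' measurableSet_Ioi).2 (ae_of_all _ fun t ht => ?_))
  · unfold U2
    exact Measurable.aestronglyMeasurable (by fun_prop)
  · rw [norm_mul, norm_of_nonneg (exp_pos _).le, Real.norm_eq_abs, mul_comm, neg_mul]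
    exact mul_le_mul_of_nonneg_right (abs_U2_le hσ hγσ hB hlo hhi (hb t)
      ⟨(mul_nonneg (exp_pos _).le hh₀).trans (exp_mul_le_traj hφ (le_of_lt ht) hm hb hlo.le),
        traj_le_max hφ (le_of_lt ht) hm hb⟩) (exp_pos _).le

theorem payoff_integrand_le (hφ : 0 ≤ φ) (hσ : 1 < σ) (hγσ : 0 ≤ γ * (σ - 1)) (hB : 0 ≤ B)
    (hlo : 0 < lo) (hhi : hi ≤ 1) (hm : Measurable ℓ) (hb : ∀ s, ℓ s ∈ Icc lo hi)
    (hh₀ : 0 ≤ h₀) {t : ℝ} (ht : 0 ≤ t) :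
    exp (-(ρ * t)) * U2 σ γ B (ℓ t) (traj φ h₀ ℓ t) ≤
      -(hi ^ (1 - σ) * h₀ ^ (γ * (σ - 1)) / (σ - 1)) * exp (-(ρ + φ * (γ * (σ - 1))) * t) := by
  have hhi₀ : 0 ≤ hi := hlo.le.trans ((hb 0).1.trans (hb 0).2)
  have hσ1 : 0 ≤ σ - 1 := by linarith
  have hlower := exp_mul_le_traj (h₀ := h₀) hφ ht hm hb hlo.le
  calc exp (-(ρ * t)) * U2 σ γ B (ℓ t) (traj φ h₀ ℓ t)
      ≤ exp (-(ρ * t)) * -(hi ^ (1 - σ) * traj φ h₀ ℓ t ^ (γ * (σ - 1)) / (σ - 1)) :=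
        mul_le_mul_of_nonneg_left (U2_le hσ hB (hlo.trans_le (hb t).1) (hb t).2 hhi
          ((mul_nonneg (exp_pos _).le hh₀).trans hlower)) (exp_pos _).le
    _ ≤ exp (-(ρ * t)) * -(hi ^ (1 - σ) * (exp (-(φ * t)) * h₀) ^ (γ * (σ - 1)) / (σ - 1)) := by
        gcongr
    _ = _ := by
        rw [mul_rpow (exp_pos _).le hh₀, ← exp_mul,
          show -(ρ + φ * (γ * (σ - 1))) * t = -(ρ * t) + -(φ * t) * (γ * (σ - 1)) by ring,
          exp_add]
        ring

theorem payoff_le (hρ : 0 < ρ) (hφ : 0 ≤ φ) (hσ : 1 < σ) (hγσ : 0 ≤ γ * (σ - 1)) (hB : 0 ≤ B)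
    (hlo : 0 < lo) (hhi : hi < 1) (hm : Measurable ℓ) (hb : ∀ s, ℓ s ∈ Icc lo hi)
    (hh₀ : 0 ≤ h₀) :
    payoff ρ φ σ γ B h₀ ℓ ≤
      -(hi ^ (1 - σ) / ((σ - 1) * (ρ + φ * (γ * (σ - 1)))) * h₀ ^ (γ * (σ - 1))) := by
  have hrate : -(ρ + φ * (γ * (σ - 1))) < 0 := neg_neg_of_pos (by positivity)
  calc payoff ρ φ σ γ B h₀ ℓ
      ≤ ∫ t in Ioi (0:ℝ), -(hi ^ (1 - σ) * h₀ ^ (γ * (σ - 1)) / (σ - 1)) *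
          exp (-(ρ + φ * (γ * (σ - 1))) * t) :=
        setIntegral_mono_on (integrableOn_payoff_integrand hρ hφ hσ hγσ hB hlo hhi hm hb hh₀)
          ((integrableOn_exp_mul_Ioi hrate 0).const_mul _) measurableSet_Ioi
          fun t ht => payoff_integrand_le hφ hσ hγσ hB hlo hhi.le hm hb hh₀ (le_of_lt ht)
    _ = _ := by
        rw [integral_const_mul, integral_exp_mul_Ioi hrate, mul_zero, exp_zero]
        field_simp

end Payoff

theorem V_le_neg_mul_rpow {ρ φ σ γ B lo hi h₀ : ℝ} (hρ : 0 < ρ) (hφ : 0 ≤ φ) (hσ : 1 < σ)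
    (hγσ : 0 ≤ γ * (σ - 1)) (hB : 0 ≤ B) (hlo : 0 < lo) (hlohi : lo ≤ hi) (hhi : hi < 1)
    (hh₀ : 0 ≤ h₀) :
    V ρ φ σ γ B lo hi h₀ ≤
      -(hi ^ (1 - σ) / ((σ - 1) * (ρ + φ * (γ * (σ - 1)))) * h₀ ^ (γ * (σ - 1))) := by
  refine csSup_le ⟨_, fun _ => lo, ⟨measurable_const, fun _ _ => ⟨le_rfl, hlohi⟩⟩, rfl⟩ ?_
  rintro _ ⟨ℓ, hℓ, rfl⟩
  obtain ⟨ℓ', hm, hb, hℓℓ'⟩ := hℓ.exists_measurable_eqOn_Ici hlohi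
  exact (payoff_congr hℓℓ').trans_le (payoff_le hρ hφ hσ hγσ hB hlo hhi hm hb hh₀)

theorem V_tendsto_atBot_general (ρ φ σ γ B lo hi : ℝ)
    (hρ : 0 < ρ) (hφ : 0 < φ) (hσ : 1 < σ)
    (hγσ : 1 < γ * (σ - 1)) (hB : 0 < B) (hlo : 0 < lo) (hlohi : lo ≤ hi) (hhi : hi < 1) :
    Tendsto (V ρ φ σ γ B lo hi) atTop atBot := by
  have hp : 0 < γ * (σ - 1) := one_pos.trans hγσ
  have hK : 0 < hi ^ (1 - σ) / ((σ - 1) * (ρ + φ * (γ * (σ - 1)))) := by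
    have : 0 < hi := hlo.trans_le hlohi
    have : 0 < σ - 1 := sub_pos.2 hσ
    positivity
  refine tendsto_atBot_mono' atTop ?_
    (tendsto_neg_atTop_atBot.comp ((tendsto_rpow_atTop hp).const_mul_atTop hK))
  filter_upwards [eventually_ge_atTop 0] with h₀ hh₀
  exact V_le_neg_mul_rpow hρ hφ.le hσ hp.le hB.le hlo hlohi hhi hh₀

/-- `V(h₀) → −∞` as `h₀ → +∞`. -/
theorem V_tendsto_atBot (ρ φ σ γ B lo hi : ℝ)
    (hρ : 0 < ρ) (hφ : 0 < φ) (hσ : 1 < σ) (hγ0 : 0 < γ) (hγ1 : γ < 1)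
    (hγσ : 1 < γ * (σ - 1)) (hB : 0 < B) (hlo : 0 < lo) (hlohi : lo ≤ hi) (hhi : hi < 1) :
    Tendsto (V ρ φ σ γ B lo hi) atTop atBot :=
  V_tendsto_atBot_general ρ φ σ γ B lo hi hρ hφ hσ hγσ hB hlo hlohi hhi
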